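/- (Dual Reimer inequality for increasing events) For increasing events A, B ⊆ {0,1}^n, P[(A,B) occurs disjointly on (ω, ξ)] ≤ P[A ∩ B̄], where ω, ξ are independent uniform configurations and B̄ is the coordinatewise colour-flip of B. -/

import Mathlib

open Finset

/-- `(x, I)` is a witness for `A`: every configuration agreeing with `x` on `I` lies in `A`. -/
def IsWitness {n : ℕ} (A : Set (Fin n → Bool)) (x : Fin n → Bool) (I : Finset (Fin n)) : Prop :=
  ∀ y : Fin n → Bool, (∀ i ∈ I, y i = x i) → y ∈ A

/-- `(A, B)` occurs disjointly on `(x, y)`: there are disjoint witness sets `I` for `A` in `x`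
and `J` for `B` in `y`. -/
def OccursDisjointly {n : ℕ} (A B : Set (Fin n → Bool)) (x y : Fin n → Bool) : Prop :=
  ∃ I J : Finset (Fin n), Disjoint I J ∧ IsWitness A x I ∧ IsWitness B y J

/-- An event is increasing if it is upward closed in the coordinatewise order. -/
def IncreasingEvent {n : ℕ} (A : Set (Fin n → Bool)) : Prop :=
  ∀ x y : Fin n → Bool, (∀ i, x i ≤ y i) → x ∈ A → y ∈ A

/-- Coordinatewise colour flip. -/
def flipConf {n : ℕ} (x : Fin n → Bool) : Fin n → Bool := fun i => !(x i)

/-- `B̄ = {x̄ : x ∈ B}`. -/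
def flipSet {n : ℕ} (B : Set (Fin n → Bool)) : Set (Fin n → Bool) := flipConf '' B

attribute [local instance] Classical.propDecidable

/-- Uniform probability of an event on `{0,1}^n`. -/
noncomputable def Pr {n : ℕ} (A : Set (Fin n → Bool)) : ℝ :=
  ((Finset.univ.filter fun x => x ∈ A).card : ℝ) / 2 ^ n

/-- Probability that `(A,B)` occurs disjointly on an independent uniform pair `(ω, ξ)`. -/
noncomputable def PrPairDisj {n : ℕ} (A B : Set (Fin n → Bool)) : ℝ :=
  (∑ x : Fin n → Bool, ∑ y : Fin n → Bool,
    if OccursDisjointly A B x y then (1:ℝ) else 0) / (2 ^ n * 2 ^ n)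

/-!
Induction on `n`, splitting off the first coordinate; write `A_c` for the section of `A` at
first coordinate `c`. If `(A, B)` occurs disjointly on `((a, x), (b, y))`, the first coordinate
lies in at most one of the two witness sets, so `(A_a, B_0)` or `(A_0, B_b)` occurs disjointly
on `(x, y)`; as `A` and `B` are increasing, both do whenever `(A_0, B_0)` does. Inclusion–exclusion
summed over `(a, b)` bounds the number of disjoint occurrences of `(A, B)` by twice those of
`(A_1, B_0)` and of `(A_0, B_1)`, and `A ∩ B̄` splits by its first coordinate into
`A_1 ∩ B̄_0` and `A_0 ∩ B̄_1`.
-/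

variable {n : ℕ}

lemma IsWitness.mem {A : Set (Fin n → Bool)} {x : Fin n → Bool} {I : Finset (Fin n)}
    (h : IsWitness A x I) : x ∈ A :=
  h x fun _ _ => rfl

lemma IsWitness.mono {A A' : Set (Fin n → Bool)} (hAA' : A ⊆ A') {x : Fin n → Bool}
    {I : Finset (Fin n)} (h : IsWitness A x I) : IsWitness A' x I :=
  fun y hy => hAA' (h y hy)

lemma OccursDisjointly.mono {A A' B B' : Set (Fin n → Bool)} (hAA' : A ⊆ A') (hBB' : B ⊆ B')
    {x y : Fin n → Bool} (h : OccursDisjointly A B x y) : OccursDisjointly A' B' x y := by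
  obtain ⟨I, J, hIJ, hI, hJ⟩ := h
  exact ⟨I, J, hIJ, hI.mono hAA', hJ.mono hBB'⟩

def headSlice (A : Set (Fin (n + 1) → Bool)) (b : Bool) : Set (Fin n → Bool) :=
  {x | Fin.cons b x ∈ A}

lemma IncreasingEvent.monotone_headSlice {A : Set (Fin (n + 1) → Bool)} (hA : IncreasingEvent A) :
    Monotone (headSlice A) :=
  fun _ _ hab _ hx => hA _ _ (Fin.cons_le_cons.2 ⟨hab, le_rfl⟩) hx

lemma IncreasingEvent.headSlice {A : Set (Fin (n + 1) → Bool)} (hA : IncreasingEvent A) (b : Bool) :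
    IncreasingEvent (headSlice A b) :=
  fun _ _ hxy hx => hA _ _ (Fin.cons_le_cons.2 ⟨le_rfl, hxy⟩) hx

lemma IsWitness.headSlice {A : Set (Fin (n + 1) → Bool)} {a c : Bool} {x : Fin n → Bool}
    {I : Finset (Fin (n + 1))} (h : IsWitness A (Fin.cons a x) I) (hc : 0 ∈ I → c = a) :
    IsWitness (headSlice A c) x (I.preimage Fin.succ (Fin.succ_injective n).injOn) := by
  intro y hy
  refine h (Fin.cons c y) fun i hi => ?_
  cases i using Fin.cases with
  | zero => simpa using hc hi
  | succ i => simpa using hy i (by simpa using hi)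

lemma OccursDisjointly.headSlice {A B : Set (Fin (n + 1) → Bool)} {a b : Bool} {x y : Fin n → Bool}
    (h : OccursDisjointly A B (Fin.cons a x) (Fin.cons b y)) :
    OccursDisjointly (headSlice A a) (headSlice B false) x y ∨
      OccursDisjointly (headSlice A false) (headSlice B b) x y := by
  obtain ⟨I, J, hIJ, hI, hJ⟩ := h
  have hIJ' := disjoint_preimage (f := Fin.succ) (hs := (Fin.succ_injective n).injOn)
    (ht := (Fin.succ_injective n).injOn) hIJ
  by_cases h0 : (0 : Fin (n + 1)) ∈ J
  · have h0I : (0 : Fin (n + 1)) ∉ I := Finset.disjoint_right.mp hIJ h0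
    exact .inr ⟨_, _, hIJ', hI.headSlice (absurd · h0I), hJ.headSlice fun _ => rfl⟩
  · exact .inl ⟨_, _, hIJ', hI.headSlice fun _ => rfl, hJ.headSlice (absurd · h0)⟩

lemma flipConf_flipConf (x : Fin n → Bool) : flipConf (flipConf x) = x :=
  funext fun i => Bool.not_not (x i)

lemma mem_flipSet {B : Set (Fin n → Bool)} {x : Fin n → Bool} :
    x ∈ flipSet B ↔ flipConf x ∈ B :=
  ⟨by rintro ⟨y, hy, rfl⟩; rwa [flipConf_flipConf], fun h => ⟨_, h, flipConf_flipConf x⟩⟩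

lemma flipConf_cons (c : Bool) (x : Fin n → Bool) :
    flipConf (Fin.cons c x : Fin (n + 1) → Bool) = Fin.cons (!c) (flipConf x) := by
  funext i
  cases i using Fin.cases <;> simp [flipConf]

lemma cons_mem_inter_flipSet {A B : Set (Fin (n + 1) → Bool)} {c : Bool} {x : Fin n → Bool} :
    Fin.cons c x ∈ A ∩ flipSet B ↔ x ∈ headSlice A c ∩ flipSet (headSlice B !c) := by
  simp only [Set.mem_inter_iff, mem_flipSet, flipConf_cons]
  rfl

lemma sum_fin_cons {M : Type*} [AddCommMonoid M] (f : (Fin (n + 1) → Bool) → M) :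
    ∑ x, f x = ∑ a, ∑ x : Fin n → Bool, f (Fin.cons a x) := by
  rw [← (Fin.consEquiv fun _ => Bool).sum_comp, Fintype.sum_prod_type]
  rfl

lemma card_inter_flipSet_succ (A B : Set (Fin (n + 1) → Bool)) :
    #{x | x ∈ A ∩ flipSet B} = #{x | x ∈ headSlice A true ∩ flipSet (headSlice B false)} +
      #{x | x ∈ headSlice A false ∩ flipSet (headSlice B true)} := by
  simp only [card_filter]
  rw [sum_fin_cons, Fintype.sum_bool]
  simp only [cons_mem_inter_flipSet, Bool.not_true, Bool.not_false]

lemma ite_add_ite_le {S P Q R : Prop} [Decidable S] [Decidable P] [Decidable Q] [Decidable R]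
    (hS : S → P ∨ Q) (hP : R → P) (hQ : R → Q) :
    (if S then 1 else 0) + (if R then 1 else 0) ≤ (if P then 1 else 0) + (if Q then 1 else 0) := by
  split_ifs <;> simp_all

noncomputable def disjointCount (A B : Set (Fin n → Bool)) : ℕ :=
  ∑ x, ∑ y, if OccursDisjointly A B x y then 1 else 0

lemma disjointCount_succ (A B : Set (Fin (n + 1) → Bool)) :
    disjointCount A B = ∑ a, ∑ b, ∑ x : Fin n → Bool, ∑ y : Fin n → Bool,
      if OccursDisjointly A B (Fin.cons a x) (Fin.cons b y) then 1 else 0 := by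
  rw [disjointCount, sum_fin_cons]
  refine sum_congr rfl fun a _ => ?_
  simp only [sum_fin_cons (fun y => if OccursDisjointly A B _ y then 1 else 0)]
  exact sum_comm

lemma disjointCount_cons_add_le {A B : Set (Fin (n + 1) → Bool)} (hA : IncreasingEvent A)
    (hB : IncreasingEvent B) (a b : Bool) :
    (∑ x, ∑ y, if OccursDisjointly A B (Fin.cons a x) (Fin.cons b y) then 1 else 0) +
        disjointCount (headSlice A false) (headSlice B false) ≤
      disjointCount (headSlice A a) (headSlice B false) +
        disjointCount (headSlice A false) (headSlice B b) := by
  simp only [disjointCount, ← sum_add_distrib]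
  refine sum_le_sum fun x _ => sum_le_sum fun y _ => ite_add_ite_le OccursDisjointly.headSlice
    (.mono (hA.monotone_headSlice (Bool.false_le a)) subset_rfl)
    (.mono subset_rfl (hB.monotone_headSlice (Bool.false_le b)))

lemma disjointCount_succ_le {A B : Set (Fin (n + 1) → Bool)} (hA : IncreasingEvent A)
    (hB : IncreasingEvent B) :
    disjointCount A B ≤ 2 * disjointCount (headSlice A true) (headSlice B false) +
      2 * disjointCount (headSlice A false) (headSlice B true) := by
  have h := disjointCount_cons_add_le hA hB
  have hff := h false false
  have hft := h false true
  have htf := h true false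
  have htt := h true true
  rw [disjointCount_succ]
  simp only [Fintype.sum_bool]
  -- summed over `(a, b)`, the four copies of the `(A_0, B_0)` count cancel
  omega

lemma disjointCount_zero (A B : Set (Fin 0 → Bool)) :
    disjointCount A B ≤ #{x | x ∈ A ∩ flipSet B} := by
  simp only [disjointCount, Fintype.sum_unique]
  split_ifs with h
  · obtain ⟨I, J, -, hI, hJ⟩ := h
    refine card_pos.2 ⟨_, mem_filter.2 ⟨mem_univ _, hI.mem, mem_flipSet.2 ?_⟩⟩
    convert hJ.mem using 1
  · exact Nat.zero_le _

theorem disjointCount_le {A B : Set (Fin n → Bool)} (hA : IncreasingEvent A)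
    (hB : IncreasingEvent B) : disjointCount A B ≤ 2 ^ n * #{x | x ∈ A ∩ flipSet B} := by
  induction n with
  | zero => simpa using disjointCount_zero A B
  | succ n ih =>
    have h₁ := ih (hA.headSlice true) (hB.headSlice false)
    have h₂ := ih (hA.headSlice false) (hB.headSlice true)
    rw [card_inter_flipSet_succ, pow_succ]
    linarith [disjointCount_succ_le hA hB]

/-- Dual Reimer inequality for increasing events:
`P[(A,B) occurs disjointly on (ω,ξ)] ≤ P[A ∩ B̄]`. -/
theorem dual_reimer {n : ℕ} (A B : Set (Fin n → Bool))
    (hA : IncreasingEvent A) (hB : IncreasingEvent B) :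
    PrPairDisj A B ≤ Pr (A ∩ flipSet B) := by
  have h : (disjointCount A B : ℝ) ≤ 2 ^ n * #{x | x ∈ A ∩ flipSet B} := by
    exact_mod_cast disjointCount_le hA hB
  calc PrPairDisj A B = disjointCount A B / (2 ^ n * 2 ^ n) := by
        simp [PrPairDisj, disjointCount]
    _ ≤ 2 ^ n * #{x | x ∈ A ∩ flipSet B} / (2 ^ n * 2 ^ n) := by gcongr
    _ = Pr (A ∩ flipSet B) := by
        rw [Pr, mul_div_mul_left _ _ (by positivity)]
        -- the two filters differ only in their decidability instances
        congr
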